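/- Let n ≥ 2, ω = exp(2πi/n), let Aₙ ∈ Mₙ(ℂ) be the diagonal matrix with (Aₙ)_{jj} = ω^j for j = 0,…,n−1, and let Fₙ be the Fourier matrix with entries (Fₙ)_{jk} = ω^{jk}. Let h ∈ Mₙ(ℂ) be a complex Hadamard matrix and set B = (1/n)·hᴴ Aₙ h. Then {(x,y,z₁,z₂) ∈ ℂ⁴ : det(x·Aₙ + y·B + z₁·AₙB + z₂·BAₙ − I) = 0} = {(x,y,z₁,z₂) ∈ ℂ⁴ : xⁿ + yⁿ + (−1)^{n−1}(ω z₁ + z₂)ⁿ = 1} if and only if there exist diagonal matrices Λ₁, Λ₂ ∈ Mₙ(ℂ) all of whose diagonal entries have modulus 1 such that h = Λ₁ Fₙ Λ₂. -/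

import Mathlib

/-!
If the zero set of the pencil contains the quadric, then for every `t ≠ ω` the line
`s ↦ (0, 0, s, -t s)` meets the quadric in `n` distinct points, so the polynomial
`s ↦ det (s • (AB - t BA) - 1)`, of degree at most `n`, has degree exactly `n`: the matrix
`AB - t BA` is invertible. Thus `ω` is the only eigenvalue of the unitary `(BA)⁻¹ AB`, whose
trace is therefore `n ω`, and a unitary matrix with trace `n ω` is `ω • 1`; so `AB = ω BA`.
This forces `B` onto the cyclic subdiagonal, and `A h = h B` then says that consecutive columns
of `h` differ by the phases `ω ^ j` up to scalars, i.e. `h = Λ₁ F Λ₂`.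

Conversely, for `h = Λ₁ F Λ₂` the matrix `B` is the cyclic shift conjugated by `Λ₂`, and the
pencil is supported on the diagonal and the cyclic subdiagonal. Only the identity and the
`n`-cycle contribute to its determinant, which gives the equation of the quadric.
-/

open Matrix Complex Polynomial Finset
open Fin.NatCast Fin.CommRing
open scoped ComplexOrder ComplexConjugate

def clockMatrix {R : Type*} [MonoidWithZero R] (n : ℕ) (ω : R) : Matrix (Fin n) (Fin n) R :=
  diagonal fun j => ω ^ (j : ℕ)

def fourierMatrix {R : Type*} [Monoid R] (n : ℕ) (ω : R) : Matrix (Fin n) (Fin n) R :=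
  of fun j k => ω ^ ((j : ℕ) * (k : ℕ))

theorem Fin.induction_add_one {n : ℕ} [NeZero n] {P : Fin n → Prop} (zero : P 0)
    (succ : ∀ k, P k → P (k + 1)) (k : Fin n) : P k := by
  rw [← Fin.cast_val_eq_self k]
  induction (k : ℕ) with
  | zero => simpa using zero
  | succ m ih => simpa [Nat.cast_succ] using succ _ ih

theorem pow_fin_val_add_one {M : Type*} [Monoid M] {n : ℕ} [NeZero n] {ζ : M} (hζ : ζ ^ n = 1)
    (k : Fin n) : ζ ^ ((k + 1 : Fin n) : ℕ) = ζ ^ (k : ℕ) * ζ := by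
  rw [Fin.val_add, Fin.val_one', ← pow_eq_pow_mod _ hζ, pow_add, ← pow_eq_pow_mod _ hζ, pow_one]

theorem IsPrimitiveRoot.pow_fin_val_inj {M : Type*} [CommMonoid M] {n : ℕ} {ζ : M}
    (hζ : IsPrimitiveRoot ζ n) {a b : Fin n} : ζ ^ (a : ℕ) = ζ ^ (b : ℕ) ↔ a = b :=
  ⟨fun h => Fin.ext (hζ.pow_inj a.isLt b.isLt h), fun h => h ▸ rfl⟩

theorem sum_fin_pow_eq_zero {K : Type*} [Field K] {n : ℕ} {ζ : K} (hζ : ζ ^ n = 1)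
    (hζ1 : ζ ≠ 1) : ∑ l : Fin n, ζ ^ (l : ℕ) = 0 := by
  rw [Fin.sum_univ_eq_sum_range (ζ ^ ·), geom_sum_eq hζ1, hζ, sub_self, zero_div]

theorem IsPrimitiveRoot.prod_fin_sub_pow_mul {R : Type*} [CommRing R] [IsDomain R] {n : ℕ}
    [NeZero n] {ω : R} (hω : IsPrimitiveRoot ω n) (x y : R) :
    ∏ j : Fin n, (x - ω ^ (j : ℕ) * y) = x ^ n - y ^ n := by
  simpa [eval_prod, Fin.prod_univ_eq_prod_range (fun j => x - ω ^ j * y)] using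
    congrArg (eval x) (X_pow_sub_C_eq_prod hω (NeZero.pos n) (rfl : y ^ n = y ^ n)).symm

theorem IsPrimitiveRoot.card_nthRootsFinset_of_ne_zero {K : Type*} [Field K] [IsAlgClosed K]
    {n : ℕ} {ζ : K} (hζ : IsPrimitiveRoot ζ n) (hn : 0 < n) {a : K} (ha : a ≠ 0) :
    #(nthRootsFinset n a) = n := by
  classical
  rw [nthRootsFinset_def, Multiset.toFinset_card_of_nodup (hζ.nthRoots_nodup ha),
    hζ.card_nthRoots, if_pos (IsAlgClosed.exists_pow_nat_eq a hn)]

theorem Equiv.Perm.eq_one_or_eq_finRotate {n : ℕ} [NeZero n] (σ : Equiv.Perm (Fin n))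
    (hσ : ∀ k, σ k = k ∨ σ k = k + 1) : σ = 1 ∨ σ = finRotate n := by
  by_cases hfix : ∀ k, σ k = k
  · exact Or.inl (Equiv.ext hfix)
  push Not at hfix
  obtain ⟨k₀, hk₀⟩ := hfix
  have hshift : ∀ k, σ (k₀ + k) = k₀ + k + 1 := by
    refine Fin.induction_add_one (by simpa using (hσ k₀).resolve_left hk₀) fun k ih => ?_
    rw [← add_assoc]
    rcases hσ (k₀ + k + 1) with h | h
    · have e : k₀ + k + 1 = k₀ + k := σ.injective (h.trans ih.symm)
      exact h.trans (congrArg (· + 1) e).symm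
    · exact h
  refine Or.inr (Equiv.ext fun k => ?_)
  simpa [finRotate_apply] using hshift (k - k₀)

theorem Matrix.det_cyclic_bidiagonal {R : Type*} [CommRing R] {n : ℕ} [NeZero n] (hn : 2 ≤ n)
    (M : Matrix (Fin n) (Fin n) R) (hM : ∀ j k, j ≠ k → j ≠ k + 1 → M j k = 0) :
    det M = ∏ j, M j j + (-1) ^ (n - 1) * ∏ k, M (k + 1) k := by
  have hne : (1 : Equiv.Perm (Fin n)) ≠ finRotate n := fun h => by
    have := congrArg (· 0) h
    simp at this
    omega
  rw [det_apply', ← sum_subset (subset_univ {1, finRotate n}), sum_pair hne, sign_finRotate]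
  · simp [finRotate_apply]
  · intro σ _ hσ
    simp only [mem_insert, mem_singleton, not_or] at hσ
    obtain ⟨k, hk⟩ : ∃ k, σ k ≠ k ∧ σ k ≠ k + 1 := by
      by_contra! h
      rcases σ.eq_one_or_eq_finRotate (fun k => or_iff_not_imp_left.mpr (h k)) with h | h
      exacts [hσ.1 h, hσ.2 h]
    exact mul_eq_zero_of_right _ (prod_eq_zero (mem_univ k) (hM _ _ hk.1 hk.2))

theorem Matrix.det_ne_zero_of_det_smul_sub_one_eq_zero {K ι : Type*} [Field K] [Fintype ι]
    [DecidableEq ι] (M : Matrix ι ι K) (S : Finset K) (hS : Fintype.card ι ≤ #S)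
    (hroots : ∀ s ∈ S, det (s • M - 1) = 0) : det M ≠ 0 := by
  set p : K[X] := det ((X : K[X]) • M.map C + (-1 : Matrix ι ι K).map C)
  have heval : ∀ s, p.eval s = det (s • M - 1) := fun s => by
    rw [← coe_evalRingHom, RingHom.map_det]
    congr 1
    ext i j
    simp [sub_eq_add_neg, mul_comm (M _ _)]
  have hp0 : p ≠ 0 := fun hp => by
    have h : p.coeff 0 = det (-1 : Matrix ι ι K) := coeff_det_X_add_C_zero M (-1)
    rw [hp, coeff_zero, det_neg, det_one, mul_one] at h
    exact pow_ne_zero _ (neg_ne_zero.mpr one_ne_zero) h.symm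
  intro hdet
  have hdeg : p.natDegree < Fintype.card ι := by
    refine (natDegree_det_X_add_C_le M (-1)).lt_of_ne fun hc => ?_
    have hlead : p.coeff (Fintype.card ι) = det M := coeff_det_X_add_C_card M (-1)
    rw [← hc, hdet] at hlead
    exact hp0 (leadingCoeff_eq_zero.mp hlead)
  exact hp0 (eq_zero_of_natDegree_lt_card_of_eval_eq_zero' p S
    (fun s hs => (heval s).trans (hroots s hs)) (hdeg.trans_le hS))

theorem IsPrimitiveRoot.det_sub_smul_ne_zero {K : Type*} [Field K] [IsAlgClosed K] {n : ℕ}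
    [NeZero n] {ω : K} (hω : IsPrimitiveRoot ω n) {U V : Matrix (Fin n) (Fin n) K}
    (hzero : ∀ z₁ z₂ : K, (-1) ^ (n - 1) * (ω * z₁ + z₂) ^ n = 1 →
      det (z₁ • U + z₂ • V - 1) = 0)
    {t : K} (ht : t ≠ ω) : det (U - t • V) ≠ 0 := by
  set κ : K := (-1) ^ (n - 1) * (ω - t) ^ n
  have hκ : κ ≠ 0 := mul_ne_zero (pow_ne_zero _ (neg_ne_zero.mpr one_ne_zero))
    (pow_ne_zero _ (sub_ne_zero.mpr ht.symm))
  refine det_ne_zero_of_det_smul_sub_one_eq_zero _ (nthRootsFinset n κ⁻¹) ?_ fun s hs => ?_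
  · rw [Fintype.card_fin, hω.card_nthRootsFinset_of_ne_zero (NeZero.pos n) (inv_ne_zero hκ)]
  rw [Polynomial.mem_nthRootsFinset (NeZero.pos n)] at hs
  convert hzero s (-t * s) ?_ using 2
  · rw [smul_sub, smul_smul, neg_mul, neg_smul, mul_comm]
    abel
  · rw [show ω * s + -t * s = (ω - t) * s by ring, mul_pow, ← mul_assoc, hs, mul_inv_cancel₀ hκ]

theorem Matrix.trace_eq_card_smul_of_det_eq_zero {K ι : Type*} [Field K] [IsAlgClosed K]
    [Fintype ι] [DecidableEq ι] (W : Matrix ι ι K) (c : K)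
    (hc : ∀ t, det (W - t • 1) = 0 → t = c) : trace W = Fintype.card ι • c := by
  have hroots : W.charpoly.roots = Multiset.replicate (Fintype.card ι) c := by
    refine Multiset.eq_replicate.mpr ⟨?_, fun t ht => hc t ?_⟩
    · rw [← (IsAlgClosed.splits W.charpoly).natDegree_eq_card_roots, charpoly_natDegree_eq_dim]
    · have hroot := (mem_roots (charpoly_monic W).ne_zero).mp ht
      rw [IsRoot, eval_charpoly, ← neg_sub, det_neg] at hroot
      simpa [smul_one_eq_diagonal] using hroot
  rw [trace_eq_sum_roots_charpoly, hroots, Multiset.sum_replicate]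

theorem Matrix.diagonal_mem_unitary {ι : Type*} [Fintype ι] [DecidableEq ι] {d : ι → ℂ}
    (hd : ∀ i, ‖d i‖ = 1) : diagonal d ∈ unitary (Matrix ι ι ℂ) := by
  rw [← unitaryGroup, mem_unitaryGroup_iff, star_eq_conjTranspose, diagonal_conjTranspose,
    diagonal_mul_diagonal, ← diagonal_one]
  congr 1
  ext i
  simp [mul_conj', hd i]

theorem Matrix.conjTranspose_mul_self_eq_smul_one {K ι : Type*} [Field K] [StarRing K]
    [Fintype ι] [DecidableEq ι] {h : Matrix ι ι K} {c : K} (hc : c ≠ 0)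
    (hh : h * hᴴ = c • 1) : hᴴ * h = c • 1 := by
  have hinv : (c⁻¹ • hᴴ) * h = 1 :=
    mul_eq_one_comm.mp (by rw [Matrix.mul_smul, hh, smul_smul, inv_mul_cancel₀ hc, one_smul])
  rw [← hinv, Matrix.smul_mul, smul_smul, mul_inv_cancel₀ hc, one_smul]

theorem Matrix.eq_smul_one_of_mem_unitary_of_trace_eq {ι : Type*} [Fintype ι] [DecidableEq ι]
    {W : Matrix ι ι ℂ} (hW : W ∈ unitary (Matrix ι ι ℂ)) {c : ℂ} (hc : ‖c‖ = 1)
    (htr : trace W = Fintype.card ι • c) : W = c • 1 := by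
  have hcc : conj c * c = 1 := by
    rw [conj_mul', hc]
    norm_num
  have hWW : Wᴴ * W = 1 := Unitary.star_mul_self_of_mem hW
  have hexp : (W - c • 1)ᴴ * (W - c • 1) = 1 - c • Wᴴ - conj c • W + 1 := by
    simp only [conjTranspose_sub, conjTranspose_smul, conjTranspose_one, Matrix.sub_mul,
      Matrix.mul_sub, hWW, Matrix.smul_mul, Matrix.mul_smul, Matrix.one_mul, Matrix.mul_one,
      star_def]
    rw [smul_sub, smul_smul, mul_comm c, hcc, one_smul]
    abel
  rw [← sub_eq_zero, ← trace_conjTranspose_mul_self_eq_zero_iff, hexp]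
  simp only [trace_add, trace_sub, trace_smul, trace_one, trace_conjTranspose, htr, smul_eq_mul,
    nsmul_eq_mul, star_mul', star_def, map_natCast]
  linear_combination (-2 * Fintype.card ι : ℂ) * hcc

theorem Matrix.eq_smul_of_det_sub_smul_ne_zero {ι : Type*} [Fintype ι] [DecidableEq ι]
    {U V : Matrix ι ι ℂ} (hU : U ∈ unitary (Matrix ι ι ℂ)) (hV : V ∈ unitary (Matrix ι ι ℂ))
    {c : ℂ} (hc : ‖c‖ = 1) (hpencil : ∀ t ≠ c, det (U - t • V) ≠ 0) : U = c • V := by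
  set W := star V * U
  have hVW : V * W = U := by
    rw [← Matrix.mul_assoc, Unitary.mul_star_self_of_mem hV, Matrix.one_mul]
  have hspec : ∀ t, det (W - t • 1) = 0 → t = c := fun t ht => by
    by_contra hne
    refine hpencil t hne ?_
    rw [← hVW, show V * W - t • V = V * (W - t • 1) by simp [Matrix.mul_sub], det_mul, ht,
      mul_zero]
  have hWc : W = c • 1 := eq_smul_one_of_mem_unitary_of_trace_eq
    (mul_mem (Unitary.star_mem hV) hU) hc (trace_eq_card_smul_of_det_eq_zero W c hspec)
  rw [← hVW, hWc, Matrix.mul_smul, Matrix.mul_one]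

theorem Matrix.mul_apply_of_eq_zero_of_ne_add_one {R : Type*} [NonUnitalNonAssocSemiring R]
    {n : ℕ} [NeZero n] {h B : Matrix (Fin n) (Fin n) R} (hB : ∀ j k, j ≠ k + 1 → B j k = 0)
    (j k : Fin n) : (h * B) j k = h j (k + 1) * B (k + 1) k := by
  rw [mul_apply, sum_eq_single (k + 1) (fun l _ hl => by rw [hB l k hl, mul_zero])
    (fun h => absurd (mem_univ _) h)]

theorem Matrix.eq_diagonal_mul_fourierMatrix_mul_diagonal {K : Type*} [Field K] {n : ℕ}
    [NeZero n] {ω : K} (hω : ω ^ n = 1) {h : Matrix (Fin n) (Fin n) K} (h0 : ∀ k, h 0 k ≠ 0)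
    (hrel : ∀ j k : Fin n, ω ^ (j : ℕ) * h j k * h 0 (k + 1) = h j (k + 1) * h 0 k) :
    h = diagonal (fun j => h j 0) * fourierMatrix n ω * diagonal (fun k => h 0 k / h 0 0) := by
  ext j k
  rw [mul_diagonal, diagonal_mul, fourierMatrix, of_apply, mul_div, eq_div_iff (h0 0)]
  induction k using Fin.induction_add_one with
  | zero => simp
  | succ k ih =>
    refine mul_right_cancel₀ (h0 k) ?_
    rw [pow_mul, pow_fin_val_add_one (by rw [← pow_mul, mul_comm, pow_mul, hω, one_pow]),
      ← pow_mul]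
    linear_combination (-h 0 0) * hrel j k + ω ^ (j : ℕ) * h 0 (k + 1) * ih

section Clock

variable {n : ℕ} [NeZero n] {ω : ℂ}

theorem IsPrimitiveRoot.clockMatrix_mem_unitary (hω : IsPrimitiveRoot ω n) :
    clockMatrix n ω ∈ unitary (Matrix (Fin n) (Fin n) ℂ) :=
  diagonal_mem_unitary fun j => by rw [norm_pow, hω.norm'_eq_one (NeZero.ne n), one_pow]

theorem smul_conjTranspose_mul_mul_mem_unitary {h U : Matrix (Fin n) (Fin n) ℂ}
    (hh : h * hᴴ = (n : ℂ) • 1) (hU : U ∈ unitary (Matrix (Fin n) (Fin n) ℂ)) :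
    ((1 : ℂ) / n) • (hᴴ * U * h) ∈ unitary (Matrix (Fin n) (Fin n) ℂ) := by
  have hn : (n : ℂ) ≠ 0 := Nat.cast_ne_zero.mpr (NeZero.ne n)
  have hUU : U * Uᴴ = 1 := Unitary.mul_star_self_of_mem hU
  rw [← unitaryGroup, mem_unitaryGroup_iff, star_eq_conjTranspose]
  calc ((1 : ℂ) / n) • (hᴴ * U * h) * (((1 : ℂ) / n) • (hᴴ * U * h))ᴴ
      = ((1 : ℂ) / n * (1 / n) * n) • (hᴴ * (U * Uᴴ) * h) := by
        simp only [conjTranspose_smul, conjTranspose_mul, conjTranspose_conjTranspose,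
          Matrix.smul_mul, Matrix.mul_smul, Matrix.mul_assoc, smul_smul]
        rw [← Matrix.mul_assoc h, hh, Matrix.smul_mul, Matrix.mul_smul, Matrix.mul_smul,
          smul_smul, Matrix.one_mul]
        simp only [star_def, map_div₀, map_one, map_natCast]
    _ = 1 := by
        rw [hUU, Matrix.mul_one, conjTranspose_mul_self_eq_smul_one hn hh, smul_smul]
        field_simp
        exact one_smul _ _

theorem clockMatrix_mul_eq_mul_smul {h : Matrix (Fin n) (Fin n) ℂ} (hh : h * hᴴ = (n : ℂ) • 1) :
    clockMatrix n ω * h = h * (((1 : ℂ) / n) • (hᴴ * clockMatrix n ω * h)) := by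
  rw [Matrix.mul_smul, ← Matrix.mul_assoc, ← Matrix.mul_assoc, hh, Matrix.smul_mul,
    Matrix.smul_mul, Matrix.one_mul, smul_smul,
    one_div_mul_cancel (Nat.cast_ne_zero.mpr (NeZero.ne n)), one_smul]

theorem IsPrimitiveRoot.apply_eq_zero_of_clockMatrix_mul_eq (hω : IsPrimitiveRoot ω n)
    {B : Matrix (Fin n) (Fin n) ℂ} (hAB : clockMatrix n ω * B = ω • (B * clockMatrix n ω))
    {j k : Fin n} (hjk : j ≠ k + 1) : B j k = 0 := by
  have hne : ω ^ (j : ℕ) - ω ^ (k : ℕ) * ω ≠ 0 := by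
    rwa [sub_ne_zero, ← pow_fin_val_add_one hω.pow_eq_one, Ne, hω.pow_fin_val_inj]
  have hjk' := congrFun (congrFun hAB j) k
  simp only [clockMatrix, diagonal_mul, mul_diagonal, Matrix.smul_apply, smul_eq_mul] at hjk'
  refine (mul_eq_zero.mp ?_).resolve_right hne
  linear_combination hjk'

theorem IsPrimitiveRoot.exists_eq_diagonal_mul_fourierMatrix_mul_diagonal
    (hω : IsPrimitiveRoot ω n) {h B : Matrix (Fin n) (Fin n) ℂ} (hunimod : ∀ j k, ‖h j k‖ = 1)
    (hB : B ∈ unitary (Matrix (Fin n) (Fin n) ℂ)) (hAh : clockMatrix n ω * h = h * B)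
    (hpencil : ∀ t ≠ ω, det (clockMatrix n ω * B - t • (B * clockMatrix n ω)) ≠ 0) :
    ∃ d₁ d₂ : Fin n → ℂ, (∀ j, ‖d₁ j‖ = 1) ∧ (∀ j, ‖d₂ j‖ = 1) ∧
      h = diagonal d₁ * fourierMatrix n ω * diagonal d₂ := by
  have hAB := eq_smul_of_det_sub_smul_ne_zero (mul_mem hω.clockMatrix_mem_unitary hB)
    (mul_mem hB hω.clockMatrix_mem_unitary) (hω.norm'_eq_one (NeZero.ne n)) hpencil
  have hcol : ∀ j k : Fin n, ω ^ (j : ℕ) * h j k = h j (k + 1) * B (k + 1) k := fun j k => by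
    rw [← mul_apply_of_eq_zero_of_ne_add_one
      (fun _ _ => hω.apply_eq_zero_of_clockMatrix_mul_eq hAB), ← hAh]
    simp [clockMatrix, diagonal_mul]
  have hrel : ∀ j k : Fin n, ω ^ (j : ℕ) * h j k * h 0 (k + 1) = h j (k + 1) * h 0 k :=
    fun j k => by
      have hcol₀ := hcol 0 k
      rw [Fin.val_zero, pow_zero, one_mul] at hcol₀
      rw [hcol, hcol₀]
      ring
  have h0 : ∀ k, h 0 k ≠ 0 := fun k => norm_ne_zero_iff.mp (by rw [hunimod]; exact one_ne_zero)
  exact ⟨fun j => h j 0, fun k => h 0 k / h 0 0, fun j => hunimod j 0,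
    fun k => by rw [norm_div, hunimod, hunimod, div_one],
    eq_diagonal_mul_fourierMatrix_mul_diagonal hω.pow_eq_one h0 hrel⟩

theorem IsPrimitiveRoot.fourierMatrix_conjTranspose_mul_clockMatrix_mul
    (hω : IsPrimitiveRoot ω n) :
    (fourierMatrix n ω)ᴴ * clockMatrix n ω * fourierMatrix n ω =
      of fun j k => if j = k + 1 then (n : ℂ) else 0 := by
  have hstar : ∀ m : ℕ, star (ω ^ m) = (ω ^ m)⁻¹ := fun m => by
    rw [star_def, inv_eq_conj (by rw [norm_pow, hω.norm'_eq_one (NeZero.ne n), one_pow])]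
  ext j k
  set ζ := ω ^ ((k : ℕ) + 1) * (ω ^ (j : ℕ))⁻¹
  have hterm : ∀ l : Fin n,
      ((fourierMatrix n ω)ᴴ * clockMatrix n ω) j l * fourierMatrix n ω l k = ζ ^ (l : ℕ) :=
    fun l => by
      simp only [clockMatrix, fourierMatrix, mul_diagonal, conjTranspose_apply, of_apply, hstar]
      rw [pow_mul', pow_mul', mul_pow, inv_pow, pow_succ, mul_pow]
      ring
  have hζ : ζ = 1 ↔ j = k + 1 := by
    rw [mul_inv_eq_one₀ (pow_ne_zero _ (hω.ne_zero (NeZero.ne n))), pow_succ,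
      ← pow_fin_val_add_one hω.pow_eq_one, hω.pow_fin_val_inj, eq_comm]
  rw [mul_apply, sum_congr rfl fun l _ => hterm l, of_apply]
  split_ifs with hjk
  · simp [hζ.mpr hjk]
  · refine sum_fin_pow_eq_zero ?_ (mt hζ.mp hjk)
    rw [mul_pow, inv_pow, ← pow_mul, ← pow_mul, mul_comm _ n, mul_comm _ n, pow_mul, pow_mul,
      hω.pow_eq_one, one_pow, one_pow, inv_one, one_mul]

theorem IsPrimitiveRoot.smul_conjTranspose_mul_clockMatrix_mul_apply (hω : IsPrimitiveRoot ω n)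
    {d₁ d₂ : Fin n → ℂ} (hd₁ : ∀ j, ‖d₁ j‖ = 1) (j k : Fin n) :
    (((1 : ℂ) / n) • ((diagonal d₁ * fourierMatrix n ω * diagonal d₂)ᴴ * clockMatrix n ω *
      (diagonal d₁ * fourierMatrix n ω * diagonal d₂))) j k =
      if j = k + 1 then star (d₂ j) * d₂ k else 0 := by
  have hD : (diagonal d₁)ᴴ * clockMatrix n ω * diagonal d₁ = clockMatrix n ω := by
    ext i l
    simp only [clockMatrix, diagonal_conjTranspose, diagonal_mul_diagonal, diagonal_apply]
    split_ifs
    · rw [Pi.star_apply, star_def, mul_right_comm, conj_mul', hd₁]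
      simp
    · rfl
  have hconj : (diagonal d₁ * fourierMatrix n ω * diagonal d₂)ᴴ * clockMatrix n ω *
      (diagonal d₁ * fourierMatrix n ω * diagonal d₂) =
      (diagonal d₂)ᴴ * ((fourierMatrix n ω)ᴴ * clockMatrix n ω * fourierMatrix n ω) *
        diagonal d₂ := by
    conv_rhs => rw [← hD]
    simp only [conjTranspose_mul, Matrix.mul_assoc]
  rw [hconj, hω.fourierMatrix_conjTranspose_mul_clockMatrix_mul, diagonal_conjTranspose,
    Matrix.smul_apply, mul_diagonal, diagonal_mul, of_apply, Pi.star_apply, smul_eq_mul]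
  split_ifs
  · field_simp [Nat.cast_ne_zero.mpr (NeZero.ne n)]
  · simp

theorem IsPrimitiveRoot.det_clockMatrix_pencil (hω : IsPrimitiveRoot ω n) (hn : 2 ≤ n)
    {B : Matrix (Fin n) (Fin n) ℂ} {d : Fin n → ℂ} (hd : ∀ k, ‖d k‖ = 1)
    (hB : ∀ j k, B j k = if j = k + 1 then star (d j) * d k else 0) (x y z₁ z₂ : ℂ) :
    det (x • clockMatrix n ω + y • B + z₁ • (clockMatrix n ω * B) +
        z₂ • (B * clockMatrix n ω) - 1) =
      (-1) ^ (n - 1) * (x ^ n + y ^ n + (-1) ^ (n - 1) * (ω * z₁ + z₂) ^ n - 1) := by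
  have hsucc : ∀ k : Fin n, k + 1 ≠ k := fun k h => by
    have h10 := congrArg Fin.val (add_eq_left.mp h)
    rw [Fin.val_one', Fin.val_zero, Nat.mod_eq_of_lt (by omega)] at h10
    exact one_ne_zero h10
  set M := x • clockMatrix n ω + y • B + z₁ • (clockMatrix n ω * B) +
    z₂ • (B * clockMatrix n ω) - 1
  have hM : ∀ j k, M j k = (if j = k then x * ω ^ (j : ℕ) - 1 else 0) +
      B j k * (y + z₁ * ω ^ (j : ℕ) + z₂ * ω ^ (k : ℕ)) := fun j k => by
    simp only [M, clockMatrix, Matrix.sub_apply, Matrix.add_apply, Matrix.smul_apply,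
      diagonal_mul, mul_diagonal, diagonal_apply, one_apply, smul_eq_mul]
    split_ifs <;> ring
  have hdiag : ∀ j, M j j = x * ω ^ (j : ℕ) - 1 := fun j => by
    rw [hM, if_pos rfl, hB, if_neg (hsucc j).symm, zero_mul, add_zero]
  have hsub : ∀ k, M (k + 1) k =
      (star (d (k + 1)) * d k) * (y - ω ^ (k : ℕ) * -(ω * z₁ + z₂)) := fun k => by
    rw [hM, if_neg (hsucc k), hB, if_pos rfl, pow_fin_val_add_one hω.pow_eq_one]
    ring
  have hphase : ∏ k : Fin n, star (d (k + 1)) * d k = 1 := by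
    rw [prod_mul_distrib, ← star_prod,
      Fintype.prod_equiv (Equiv.addRight 1) (fun k => d (k + 1)) d fun _ => rfl, star_def,
      mul_comm, mul_conj', norm_prod]
    simp [hd]
  have hprod_diag : ∏ j : Fin n, (x * ω ^ (j : ℕ) - 1) = (-1) ^ n * (1 - x ^ n) := by
    have h1 := hω.prod_fin_sub_pow_mul 1 x
    rw [one_pow] at h1
    rw [← h1, ← Fin.prod_const, ← prod_mul_distrib]
    exact prod_congr rfl fun j _ => by ring
  have hneg : (-1 : ℂ) ^ n = -(-1) ^ (n - 1) := by
    rw [← Nat.sub_add_cancel (NeZero.one_le : 1 ≤ n), pow_succ, Nat.add_sub_cancel]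
    ring
  rw [det_cyclic_bidiagonal hn M fun j k h₁ h₂ => by
      rw [hM, if_neg h₁, hB, if_neg h₂, zero_mul, add_zero],
    prod_congr rfl fun j _ => hdiag j, prod_congr rfl fun k _ => hsub k, prod_mul_distrib,
    hphase, hω.prod_fin_sub_pow_mul, hprod_diag, neg_pow (ω * z₁ + z₂), hneg]
  ring

end Clock

theorem stmt_7 (n : ℕ) (hn : 2 ≤ n)
    (ω : ℂ) (hω : ω = Complex.exp (2 * Real.pi * Complex.I / n))
    (A F : Matrix (Fin n) (Fin n) ℂ)
    (hA : A = Matrix.diagonal (fun j : Fin n => ω ^ (j : ℕ)))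
    (hF : F = Matrix.of (fun j k : Fin n => ω ^ ((j : ℕ) * (k : ℕ))))
    (h : Matrix (Fin n) (Fin n) ℂ)
    (hHadUnimod : ∀ j k : Fin n, ‖h j k‖ = 1)
    (hHadOrtho : h * hᴴ = (n : ℂ) • (1 : Matrix (Fin n) (Fin n) ℂ))
    (B : Matrix (Fin n) (Fin n) ℂ)
    (hB : B = ((1 : ℂ) / n) • (hᴴ * A * h)) :
    ({p : ℂ × ℂ × ℂ × ℂ |
        (p.1 • A + p.2.1 • B + p.2.2.1 • (A * B) + p.2.2.2 • (B * A) - 1).det = 0} =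
      {p : ℂ × ℂ × ℂ × ℂ |
        p.1 ^ n + p.2.1 ^ n + (-1 : ℂ) ^ (n - 1) * (ω * p.2.2.1 + p.2.2.2) ^ n = 1})
    ↔ ∃ d₁ d₂ : Fin n → ℂ,
        (∀ j, ‖d₁ j‖ = 1) ∧ (∀ j, ‖d₂ j‖ = 1) ∧
        h = Matrix.diagonal d₁ * F * Matrix.diagonal d₂ := by
  have : NeZero n := ⟨by omega⟩
  have hprim : IsPrimitiveRoot ω n := hω ▸ isPrimitiveRoot_exp n (NeZero.ne n)
  change A = clockMatrix n ω at hA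
  change F = fourierMatrix n ω at hF
  subst hA hF hB
  constructor
  · intro hset
    refine hprim.exists_eq_diagonal_mul_fourierMatrix_mul_diagonal hHadUnimod
      (smul_conjTranspose_mul_mul_mem_unitary hHadOrtho hprim.clockMatrix_mem_unitary)
      (clockMatrix_mul_eq_mul_smul hHadOrtho) fun t ht => hprim.det_sub_smul_ne_zero ?_ ht
    intro z₁ z₂ hz
    have hmem : ((0 : ℂ), (0 : ℂ), z₁, z₂) ∈ {p : ℂ × ℂ × ℂ × ℂ |
        p.1 ^ n + p.2.1 ^ n + (-1 : ℂ) ^ (n - 1) * (ω * p.2.2.1 + p.2.2.2) ^ n = 1} := by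
      simpa [zero_pow (NeZero.ne n)] using hz
    rw [← hset] at hmem
    simpa using hmem
  · rintro ⟨d₁, d₂, hd₁, hd₂, rfl⟩
    ext ⟨x, y, z₁, z₂⟩
    rw [Set.mem_ofPred_eq, Set.mem_ofPred_eq,
      hprim.det_clockMatrix_pencil hn hd₂ (hprim.smul_conjTranspose_mul_clockMatrix_mul_apply hd₁),
      mul_eq_zero_iff_left (pow_ne_zero _ (by norm_num)), sub_eq_zero]
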